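/- arXiv:1503.01871 — 3 statements merged into one kernel-verified Lean document; each statement's English description precedes it below -/
import Mathlib

section
/- Assume (H1) and let x be a strong global solution of the dynamical system. Let z, w, v, p ∈ H with v ∈ Az, p ∈ N_C(z) and w = v + p + Dz. Then for almost every t ≥ 0 the following inequality holds (in ℝ ∪ {+∞}): 2⟨ẋ(t), x(t) − z⟩ + λ(t)(2η − 3λ(t))‖D x(t) − D z‖² ≤ 2λ(t)β(t)[ sup_{u ∈ C} φ_B(u, p/β(t)) − σ_C(p/β(t)) ] + 3λ(t)²β(t)²‖B x(t)‖² + 3λ(t)²‖Dz + v‖² + 2λ(t)⟨z − x(t), w⟩. -/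
/-!
Monotonicity of `A`, tested between `(z, v)` and the point `ẋ(t) + x(t)` of the differential
inclusion, bounds `⟪ẋ + (x - z), ẋ + E⟫` from above by `0`, where `E` collects the `D`-, `B`- and
`v`-terms. Young's inequality absorbs the cross term `⟪ẋ, E⟫` into `‖E‖²`, cocoercivity of `D`
produces the term `2λη‖Dx - Dz‖²`, and `‖E‖² ≤ 3(…)` gives the quadratic terms. Finally, since
`p ∈ N_C(z)`, the support function at `p/β` equals `⟪z, p/β⟫`, and the remaining `B`-term is one
of the values whose supremum defines `φ_B(z, p/β)`.
-/

open scoped RealInnerProductSpace Pointwise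
open MeasureTheory Filter

variable {H : Type*} [NormedAddCommGroup H] [InnerProductSpace ℝ H]

/-- A set-valued operator `A : H ⇒ H` (given by its value map) is monotone. -/
def MonotoneOperator (A : H → Set H) : Prop :=
  ∀ ⦃x u y v : H⦄, u ∈ A x → v ∈ A y → (0:ℝ) ≤ ⟪x - y, u - v⟫

/-- `A` is maximally monotone: monotone and without proper monotone extension. -/
def MaximallyMonotone (A : H → Set H) : Prop :=
  MonotoneOperator A ∧ ∀ A' : H → Set H, MonotoneOperator A' → (∀ x, A x ⊆ A' x) → A' = A

/-- `A` is `γ`-strongly monotone. -/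
def StronglyMonotoneOperator (γ : ℝ) (A : H → Set H) : Prop :=
  ∀ ⦃x u y v : H⦄, u ∈ A x → v ∈ A y → γ * ‖x - y‖ ^ 2 ≤ ⟪x - y, u - v⟫

/-- A single-valued operator `T` is `γ`-cocoercive. -/
def Cocoercive (γ : ℝ) (T : H → H) : Prop :=
  ∀ x y : H, γ * ‖T x - T y‖ ^ 2 ≤ ⟪x - y, T x - T y⟫

/-- The normal cone of a set `C` at `z` (empty when `z ∉ C`). -/
def normalCone (C : Set H) (z : H) : Set H :=
  {u | z ∈ C ∧ ∀ y ∈ C, ⟪y - z, u⟫ ≤ (0:ℝ)}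

/-- The support function `σ_C`, with values in `ℝ ∪ {±∞}`. -/
noncomputable def supportFn (C : Set H) (u : H) : EReal :=
  ⨆ y ∈ C, ((⟪y, u⟫ : ℝ) : EReal)

/-- The Fitzpatrick function of a single-valued operator `B`. -/
noncomputable def fitzpatrick (B : H → H) (x u : H) : EReal :=
  ⨆ y : H, ((⟪x, B y⟫ + ⟪y, u⟫ - ⟪y, B y⟫ : ℝ) : EReal)

/-- Conversion of an extended real into `[0,∞]` (negative values go to `0`). -/
noncomputable def erealToENNReal (x : EReal) : ENNReal :=
  if x = ⊤ then ⊤ else ENNReal.ofReal x.toReal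

/-- Absolute continuity of `f` on `[0,b]`, via the `ε`-`η` definition. -/
def AbsolutelyContinuousOnIcc (f : ℝ → H) (b : ℝ) : Prop :=
  ∀ ε > (0:ℝ), ∃ η > (0:ℝ), ∀ (n : ℕ) (a c : Fin n → ℝ),
    (∀ k, 0 ≤ a k ∧ a k ≤ c k ∧ c k ≤ b) →
    (Pairwise fun i j => Disjoint (Set.Ioo (a i) (c i)) (Set.Ioo (a j) (c j))) →
    ∑ k, (c k - a k) < η → ∑ k, ‖f (c k) - f (a k)‖ < ε

/-- A strong global solution `x`, with derivative function `xd`, of the dynamical system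
`ẋ(t) + x(t) = J_{λ(t)A}(x(t) − λ(t)Dx(t) − λ(t)β(t)Bx(t))`, `x(0) = x₀`, where the
resolvent equation is expressed as the differential inclusion
`x(t) − λ(t)Dx(t) − λ(t)β(t)Bx(t) − (ẋ(t)+x(t)) ∈ λ(t) A(ẋ(t)+x(t))`. -/
def IsStrongGlobalSolution (A : H → Set H) (D B : H → H) (lam beta : ℝ → ℝ)
    (x₀ : H) (x xd : ℝ → H) : Prop :=
  (∀ b > (0:ℝ), AbsolutelyContinuousOnIcc x b) ∧ x 0 = x₀ ∧
  ∀ᵐ t ∂(volume.restrict (Set.Ici (0:ℝ))),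
    HasDerivAt x (xd t) t ∧
    x t - lam t • D (x t) - (lam t * beta t) • B (x t) - (xd t + x t)
      ∈ lam t • A (xd t + x t)

/-- The solution set `zer(A + D + N_C)`. -/
def zerSum (A : H → Set H) (D : H → H) (C : Set H) : Set H :=
  {z | ∃ v ∈ A z, ∃ p ∈ normalCone C z, v + D z + p = 0}

theorem MonotoneOperator.inner_sub_le_zero_of_mem_smul {A : H → Set H} (hA : MonotoneOperator A)
    {l : ℝ} (hl : 0 ≤ l) {y z v q : H} (hv : v ∈ A z) (hq : q ∈ l • A y) :
    ⟪y - z, l • v - q⟫ ≤ 0 := by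
  obtain ⟨a, ha, rfl⟩ := hq
  rw [← smul_sub, real_inner_smul_right, ← neg_sub a v, inner_neg_right, mul_neg,
    neg_nonpos]
  exact mul_nonneg hl (hA ha hv)

theorem two_mul_inner_add_two_mul_inner_le_of_inner_add_nonpos {u d e : H}
    (h : ⟪u + d, u + e⟫ ≤ 0) : 2 * ⟪u, d⟫ + 2 * ⟪d, e⟫ ≤ ‖e‖ ^ 2 := by
  have hexp : ⟪u + d, u + e⟫ = ‖u‖ ^ 2 + ⟪u, e⟫ + ⟪u, d⟫ + ⟪d, e⟫ := by
    rw [inner_add_left, inner_add_right, inner_add_right, real_inner_self_eq_norm_sq,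
      real_inner_comm u d]
    ring
  linarith [norm_add_sq_real u e, sq_nonneg ‖u + e‖, sq_nonneg ‖u‖]

theorem norm_add_add_sq_le {E : Type*} [SeminormedAddCommGroup E] (a b c : E) :
    ‖a + b + c‖ ^ 2 ≤ 3 * (‖a‖ ^ 2 + ‖b‖ ^ 2 + ‖c‖ ^ 2) := by
  have h := norm_add₃_le (a := a) (b := b) (c := c)
  nlinarith [norm_nonneg (a + b + c), sq_nonneg (‖a‖ - ‖b‖), sq_nonneg (‖b‖ - ‖c‖),
    sq_nonneg (‖a‖ - ‖c‖)]

/-- At a time `t`, with `X = x(t)`, `V = ẋ(t)`, `l = λ(t)`, `b = β(t)`. -/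
theorem inner_deriv_sub_le_of_mem_resolvent_inclusion {A : H → Set H} (hA : MonotoneOperator A)
    {η : ℝ} {D B : H → H} (hD : Cocoercive η D) {l b : ℝ} (hl : 0 ≤ l) {X V z v : H}
    (hincl : X - l • D X - (l * b) • B X - (V + X) ∈ l • A (V + X)) (hv : v ∈ A z) :
    2 * ⟪V, X - z⟫ + l * (2 * η - 3 * l) * ‖D X - D z‖ ^ 2 ≤
      3 * l ^ 2 * b ^ 2 * ‖B X‖ ^ 2 + 3 * l ^ 2 * ‖D z + v‖ ^ 2
        - 2 * (l * b) * ⟪X - z, B X⟫ - 2 * l * ⟪X - z, D z + v⟫ := by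
  set E := l • (D X - D z) + (l * b) • B X + l • (D z + v)
  have hmono : ⟪V + (X - z), V + E⟫ ≤ 0 := by
    have := hA.inner_sub_le_zero_of_mem_smul hl hv hincl
    convert this using 2 <;> module
  have hyoung := two_mul_inner_add_two_mul_inner_le_of_inner_add_nonpos hmono
  have hE : ‖E‖ ^ 2 ≤ 3 * (l ^ 2 * ‖D X - D z‖ ^ 2 + l ^ 2 * b ^ 2 * ‖B X‖ ^ 2
      + l ^ 2 * ‖D z + v‖ ^ 2) := by
    have := norm_add_add_sq_le (l • (D X - D z)) ((l * b) • B X) (l • (D z + v))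
    simpa only [norm_smul, Real.norm_eq_abs, mul_pow, sq_abs] using this
  have hinner : ⟪X - z, E⟫ = l * ⟪X - z, D X - D z⟫ + l * b * ⟪X - z, B X⟫
      + l * ⟪X - z, D z + v⟫ := by
    simp only [E, inner_add_right, real_inner_smul_right]
  have hcoco : l * (η * ‖D X - D z‖ ^ 2) ≤ l * ⟪X - z, D X - D z⟫ :=
    mul_le_mul_of_nonneg_left (hD X z) hl
  linarith

theorem smul_mem_normalCone {C : Set H} {z p : H} (hp : p ∈ normalCone C z) {c : ℝ}
    (hc : 0 ≤ c) : c • p ∈ normalCone C z :=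
  ⟨hp.1, fun y hy => by
    rw [real_inner_smul_right]
    exact mul_nonpos_of_nonneg_of_nonpos hc (hp.2 y hy)⟩

theorem supportFn_eq_inner_of_mem_normalCone {C : Set H} {z p : H} (hp : p ∈ normalCone C z) :
    supportFn C p = ((⟪z, p⟫ : ℝ) : EReal) := by
  refine le_antisymm (iSup₂_le fun y hy => EReal.coe_le_coe_iff.mpr ?_)
    (le_iSup₂_of_le z hp.1 le_rfl)
  have := hp.2 y hy
  rw [inner_sub_left] at this
  linarith

theorem coe_le_biSup_fitzpatrick_sub_supportFn {C : Set H} {z p : H} (hp : p ∈ normalCone C z)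
    (B : H → H) (y : H) :
    ((⟪z, B y⟫ + ⟪y, p⟫ - ⟪y, B y⟫ - ⟪z, p⟫ : ℝ) : EReal) ≤
      (⨆ u ∈ C, fitzpatrick B u p) - supportFn C p := by
  have hfitz : ((⟪z, B y⟫ + ⟪y, p⟫ - ⟪y, B y⟫ : ℝ) : EReal) ≤ ⨆ u ∈ C, fitzpatrick B u p :=
    le_iSup₂_of_le z hp.1
      (le_iSup (fun y' => ((⟪z, B y'⟫ + ⟪y', p⟫ - ⟪y', B y'⟫ : ℝ) : EReal)) y)
  rw [supportFn_eq_inner_of_mem_normalCone hp, EReal.coe_sub]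
  exact EReal.sub_le_sub hfitz le_rfl

theorem lemma_fej1_general
    (A : H → Set H) (hA : MaximallyMonotone A)
    (η : ℝ)
    (D B : H → H) (hD : Cocoercive η D)
    (lam beta : ℝ → ℝ)
    (hlam_pos : ∀ t : ℝ, 0 ≤ t → 0 < lam t) (hbeta_pos : ∀ t : ℝ, 0 ≤ t → 0 < beta t)
    (x₀ : H) (x xd : ℝ → H)
    (hsol : IsStrongGlobalSolution A D B lam beta x₀ x xd)
    (z w v p : H) (hv : v ∈ A z) (hp : p ∈ normalCone {q : H | B q = 0} z)
    (hw : w = v + p + D z) :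
    ∀ᵐ t ∂(volume.restrict (Set.Ici (0:ℝ))),
      ((2 * ⟪xd t, x t - z⟫ + lam t * (2 * η - 3 * lam t) * ‖D (x t) - D z‖ ^ 2 : ℝ) : EReal) ≤
        ((2 * lam t * beta t : ℝ) : EReal) *
          ((⨆ u ∈ {q : H | B q = 0}, fitzpatrick B u ((beta t)⁻¹ • p)) -
            supportFn {q : H | B q = 0} ((beta t)⁻¹ • p)) +
        ((3 * lam t ^ 2 * beta t ^ 2 * ‖B (x t)‖ ^ 2 + 3 * lam t ^ 2 * ‖D z + v‖ ^ 2 +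
            2 * lam t * ⟪z - x t, w⟫ : ℝ) : EReal) := by
  filter_upwards [hsol.2.2, ae_restrict_mem measurableSet_Ici] with t hsol_t ht
  obtain ⟨-, hincl⟩ := hsol_t
  have hl := hlam_pos t ht
  have hb := hbeta_pos t ht
  have hreal := inner_deriv_sub_le_of_mem_resolvent_inclusion hA.1 hD hl.le hincl hv
  have hgap := coe_le_biSup_fitzpatrick_sub_supportFn
    (smul_mem_normalCone hp (inv_nonneg.mpr hb.le)) B (x t)
  have hrhs : 3 * lam t ^ 2 * beta t ^ 2 * ‖B (x t)‖ ^ 2 + 3 * lam t ^ 2 * ‖D z + v‖ ^ 2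
        - 2 * (lam t * beta t) * ⟪x t - z, B (x t)⟫ - 2 * lam t * ⟪x t - z, D z + v⟫ =
      2 * lam t * beta t * (⟪z, B (x t)⟫ + ⟪x t, (beta t)⁻¹ • p⟫ - ⟪x t, B (x t)⟫
        - ⟪z, (beta t)⁻¹ • p⟫) + (3 * lam t ^ 2 * beta t ^ 2 * ‖B (x t)‖ ^ 2
        + 3 * lam t ^ 2 * ‖D z + v‖ ^ 2 + 2 * lam t * ⟪z - x t, w⟫) := by
    simp only [hw, real_inner_smul_right, inner_sub_left, inner_add_right]
    field_simp
    ring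
  calc _ ≤ ((_ : ℝ) : EReal) := EReal.coe_le_coe_iff.mpr (hreal.trans_eq hrhs)
    _ ≤ _ := by
      rw [EReal.coe_add, EReal.coe_mul _ (_ - _)]
      gcongr
      exact hgap

/-- Lemma 1: the basic Lyapunov inequality along trajectories, in `ℝ ∪ {+∞}`. -/
theorem lemma_fej1 [CompleteSpace H]
    (A : H → Set H) (hA : MaximallyMonotone A)
    (η μ : ℝ) (hη : 0 < η) (hμ : 0 < μ)
    (D B : H → H) (hD : Cocoercive η D) (hB : Cocoercive μ B)
    (hC : {q : H | B q = 0}.Nonempty)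
    (lam beta : ℝ → ℝ)
    (hlam_pos : ∀ t : ℝ, 0 ≤ t → 0 < lam t) (hbeta_pos : ∀ t : ℝ, 0 ≤ t → 0 < beta t)
    (hH1 : ∀ b > (0:ℝ), ContinuousOn lam (Set.Icc 0 b) ∧ ContinuousOn beta (Set.Icc 0 b))
    (x₀ : H) (x xd : ℝ → H)
    (hsol : IsStrongGlobalSolution A D B lam beta x₀ x xd)
    (z w v p : H) (hv : v ∈ A z) (hp : p ∈ normalCone {q : H | B q = 0} z)
    (hw : w = v + p + D z) :
    ∀ᵐ t ∂(volume.restrict (Set.Ici (0:ℝ))),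
      ((2 * ⟪xd t, x t - z⟫ + lam t * (2 * η - 3 * lam t) * ‖D (x t) - D z‖ ^ 2 : ℝ) : EReal) ≤
        ((2 * lam t * beta t : ℝ) : EReal) *
          ((⨆ u ∈ {q : H | B q = 0}, fitzpatrick B u ((beta t)⁻¹ • p)) -
            supportFn {q : H | B q = 0} ((beta t)⁻¹ • p)) +
        ((3 * lam t ^ 2 * beta t ^ 2 * ‖B (x t)‖ ^ 2 + 3 * lam t ^ 2 * ‖D z + v‖ ^ 2 +
            2 * lam t * ⟪z - x t, w⟫ : ℝ) : EReal) :=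
  lemma_fej1_general A hA η D B hD lam beta hlam_pos hbeta_pos x₀ x xd hsol z w v p hv hp hw
end

section
/- Assume (H1) and let x be a strong global solution of the dynamical system. Let z ∈ C and v ∈ Az. Then for every ε ≥ 0 and almost every t ≥ 0: 2⟨ẋ(t), x(t) − z⟩ + ((1+2ε)/(1+ε))‖ẋ(t)‖² + (2ε/(1+ε)) λ(t)β(t) ⟨x(t) − z, B x(t)⟩ ≤ λ(t)β(t) ( (1+ε)λ(t)β(t) − 2μ/(1+ε) ) ‖B x(t)‖² + 2λ(t) ⟨z − ẋ(t) − x(t), D x(t) + v⟩. -/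
open scoped RealInnerProductSpace Pointwise
open MeasureTheory Filter

variable {H : Type*} [NormedAddCommGroup H] [InnerProductSpace ℝ H]

/-!
Write `y = ẋ + x` and `K = λβ`. The inclusion says `λ⁻¹(x - λDx - KBx - y) ∈ A y`, so monotonicity
of `A` against `v ∈ A z` gives
`‖ẋ‖² + ⟨ẋ, x - z⟩ + K⟨ẋ, Bx⟩ + K⟨x - z, Bx⟩ ≤ λ⟨z - y, Dx + v⟩`.
The cross term `K⟨ẋ, Bx⟩` is absorbed by `0 ≤ ‖ẋ + (1+ε)K Bx‖²`, and a share `2/(1+ε)` of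
`K⟨x - z, Bx⟩` is traded for `μ‖Bx‖²` by cocoercivity of `B`, since `Bz = 0`.
-/

theorem MonotoneOperator.inner_nonneg_of_mem_smul {A : H → Set H} (hA : MonotoneOperator A)
    {L : ℝ} (hL : 0 ≤ L) {y z r v : H} (hr : r ∈ L • A y) (hv : v ∈ A z) :
    0 ≤ ⟪y - z, r - L • v⟫ := by
  obtain ⟨w, hw, rfl⟩ := Set.mem_smul_set.mp hr
  rw [← smul_sub, real_inner_smul_right]
  exact mul_nonneg hL (hA hw hv)

theorem Cocoercive.mul_norm_sq_le_inner_of_eq_zero {μ : ℝ} {B : H → H} (hB : Cocoercive μ B)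
    {z : H} (hz : B z = 0) (x : H) : μ * ‖B x‖ ^ 2 ≤ ⟪x - z, B x⟫ := by
  simpa [hz] using hB x z

theorem neg_two_mul_inner_le_div_add (a b : H) {s K : ℝ} (hs : 0 < s) :
    -(2 * K * ⟪a, b⟫) ≤ ‖a‖ ^ 2 / s + s * K ^ 2 * ‖b‖ ^ 2 := by
  have hsq : 0 ≤ ‖a + (s * K) • b‖ ^ 2 := sq_nonneg _
  rw [norm_add_sq_real, real_inner_smul_right, norm_smul, mul_pow, Real.norm_eq_abs, sq_abs]
    at hsq
  rw [div_add' _ _ _ hs.ne', le_div_iff₀ hs]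
  nlinarith

theorem lyapunov_inequality (a p z b w : H) {L K μ ε : ℝ} (hK : 0 ≤ K) (hε : 0 ≤ ε)
    (hmono : 0 ≤ ⟪a + p - z, -a - L • w - K • b⟫) (hco : μ * ‖b‖ ^ 2 ≤ ⟪p - z, b⟫) :
    2 * ⟪a, p - z⟫ + ((1 + 2 * ε) / (1 + ε)) * ‖a‖ ^ 2 + (2 * ε / (1 + ε)) * K * ⟪p - z, b⟫ ≤
      K * ((1 + ε) * K - 2 * μ / (1 + ε)) * ‖b‖ ^ 2 + 2 * L * ⟪z - a - p, w⟫ := by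
  have hs : 0 < 1 + ε := by linarith
  have hkey : ‖a‖ ^ 2 + ⟪a, p - z⟫ + K * ⟪a, b⟫ + K * ⟪p - z, b⟫ ≤ L * ⟪z - a - p, w⟫ := by
    have hy : a + p - z = a + (p - z) := by abel
    have hzap : z - a - p = -(a + (p - z)) := by abel
    simp only [hy, hzap, inner_add_left, inner_sub_right, inner_neg_right, inner_neg_left,
      real_inner_smul_right, real_inner_self_eq_norm_sq, real_inner_comm a (p - z)] at hmono ⊢
    linarith
  have hyoung := neg_two_mul_inner_le_div_add a b (K := K) hs
  have hcoK : K * (μ * ‖b‖ ^ 2) ≤ K * ⟪p - z, b⟫ := mul_le_mul_of_nonneg_left hco hK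
  rw [← sub_nonneg]
  have hexpand : K * ((1 + ε) * K - 2 * μ / (1 + ε)) * ‖b‖ ^ 2 + 2 * L * ⟪z - a - p, w⟫ -
      (2 * ⟪a, p - z⟫ + ((1 + 2 * ε) / (1 + ε)) * ‖a‖ ^ 2 + (2 * ε / (1 + ε)) * K * ⟪p - z, b⟫) =
      2 * (L * ⟪z - a - p, w⟫ - (‖a‖ ^ 2 + ⟪a, p - z⟫ + K * ⟪a, b⟫ + K * ⟪p - z, b⟫)) +
      (‖a‖ ^ 2 / (1 + ε) + (1 + ε) * K ^ 2 * ‖b‖ ^ 2 + 2 * K * ⟪a, b⟫) +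
      2 / (1 + ε) * (K * ⟪p - z, b⟫ - K * (μ * ‖b‖ ^ 2)) := by
    field_simp
    ring
  rw [hexpand]
  have hshare : 0 ≤ 2 / (1 + ε) * (K * ⟪p - z, b⟫ - K * (μ * ‖b‖ ^ 2)) :=
    mul_nonneg (by positivity) (sub_nonneg.2 hcoK)
  linarith

theorem lemma_fej2_general
    (A : H → Set H) (hA : MaximallyMonotone A)
    (μ : ℝ)
    (D B : H → H) (hB : Cocoercive μ B)
    (lam beta : ℝ → ℝ)
    (hlam_pos : ∀ t : ℝ, 0 ≤ t → 0 < lam t) (hbeta_pos : ∀ t : ℝ, 0 ≤ t → 0 < beta t)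
    (x₀ : H) (x xd : ℝ → H)
    (hsol : IsStrongGlobalSolution A D B lam beta x₀ x xd)
    (z v : H) (hz : z ∈ {q : H | B q = 0}) (hv : v ∈ A z) :
    ∀ ε : ℝ, 0 ≤ ε →
      ∀ᵐ t ∂(volume.restrict (Set.Ici (0:ℝ))),
        2 * ⟪xd t, x t - z⟫ + ((1 + 2 * ε) / (1 + ε)) * ‖xd t‖ ^ 2 +
            (2 * ε / (1 + ε)) * lam t * beta t * ⟪x t - z, B (x t)⟫ ≤
          lam t * beta t * ((1 + ε) * lam t * beta t - 2 * μ / (1 + ε)) * ‖B (x t)‖ ^ 2 +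
            2 * lam t * ⟪z - xd t - x t, D (x t) + v⟫ := by
  intro ε hε
  filter_upwards [hsol.2.2, ae_restrict_mem measurableSet_Ici] with t hsol_t ht
  obtain ⟨-, hincl⟩ := hsol_t
  have hL := hlam_pos t ht
  have hmono := hA.1.inner_nonneg_of_mem_smul hL.le hincl hv
  have hres : x t - lam t • D (x t) - (lam t * beta t) • B (x t) - (xd t + x t) - lam t • v =
      -xd t - lam t • (D (x t) + v) - (lam t * beta t) • B (x t) := by
    module
  rw [hres] at hmono
  have hK : 0 ≤ lam t * beta t := (mul_pos hL (hbeta_pos t ht)).le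
  have := lyapunov_inequality (xd t) (x t) z (B (x t)) (D (x t) + v) hK hε hmono
    (hB.mul_norm_sq_le_inner_of_eq_zero hz (x t))
  linear_combination this

/-- Lemma 2: a Lyapunov inequality with free parameter `ε ≥ 0`. -/
theorem lemma_fej2 [CompleteSpace H]
    (A : H → Set H) (hA : MaximallyMonotone A)
    (η μ : ℝ) (hη : 0 < η) (hμ : 0 < μ)
    (D B : H → H) (hD : Cocoercive η D) (hB : Cocoercive μ B)
    (hC : {q : H | B q = 0}.Nonempty)
    (lam beta : ℝ → ℝ)
    (hlam_pos : ∀ t : ℝ, 0 ≤ t → 0 < lam t) (hbeta_pos : ∀ t : ℝ, 0 ≤ t → 0 < beta t)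
    (hH1 : ∀ b > (0:ℝ), ContinuousOn lam (Set.Icc 0 b) ∧ ContinuousOn beta (Set.Icc 0 b))
    (x₀ : H) (x xd : ℝ → H)
    (hsol : IsStrongGlobalSolution A D B lam beta x₀ x xd)
    (z v : H) (hz : z ∈ {q : H | B q = 0}) (hv : v ∈ A z) :
    ∀ ε : ℝ, 0 ≤ ε →
      ∀ᵐ t ∂(volume.restrict (Set.Ici (0:ℝ))),
        2 * ⟪xd t, x t - z⟫ + ((1 + 2 * ε) / (1 + ε)) * ‖xd t‖ ^ 2 +
            (2 * ε / (1 + ε)) * lam t * beta t * ⟪x t - z, B (x t)⟫ ≤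
          lam t * beta t * ((1 + ε) * lam t * beta t - 2 * μ / (1 + ε)) * ‖B (x t)‖ ^ 2 +
            2 * lam t * ⟪z - xd t - x t, D (x t) + v⟫ :=
  lemma_fej2_general A hA μ D B hB lam beta hlam_pos hbeta_pos x₀ x xd hsol z v hz hv
end

section
/- (Ergodic continuous Opial Lemma.) Let S ⊆ H be a nonempty set, x : [0,∞) → H a strongly (Bochner) measurable map, and λ : [0,∞) → (0,∞) a measurable function that is integrable on each interval [0,b] and satisfies ∫₀^∞ λ(t) dt = ∞. Define x̃ : (0,∞) → H by x̃(t) = (1/∫₀^t λ(s) ds) ∫₀^t λ(s) x(s) ds. Assume: (i) for every z ∈ S, lim_{t→∞} ‖x(t) − z‖ exists; (ii) every weak sequential cluster point of x̃ (i.e., every weak limit of a sequence x̃(t_n) with t_n → ∞) belongs to S. Then there exists x_∞ ∈ S such that x̃(t) converges weakly to x_∞ as t → ∞. -/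
open scoped RealInnerProductSpace Pointwise
open MeasureTheory Filter

variable {H : Type*} [NormedAddCommGroup H] [InnerProductSpace ℝ H]

/-!
Since `∫₀ᵗ λ → ∞`, weighted averages of an eventually bounded function are eventually bounded,
and those of a convergent function converge to the same limit (a weighted Cesàro lemma). The
function `x` is eventually bounded because `‖x t - z‖` converges, and by polarization
`⟪x t, z₁ - z₂⟫` converges for `z₁ z₂ ∈ S`; hence the averages `x̃` are eventually bounded and
`⟪x̃ t, z₁ - z₂⟫` converges. Bounded sequences have weakly convergent subsequences, whose limits
lie in `S` by hypothesis, and two such limits `q₁ q₂` satisfy `‖q₁ - q₂‖² = 0` because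
`⟪x̃ t, q₁ - q₂⟫` has a single limit. So `x̃` has exactly one weak cluster point, its weak limit.
-/

open scoped Topology

theorem tendsto_intervalIntegral_atTop_of_lintegral_eq_top {lam : ℝ → ℝ}
    (hlam : ∀ t, 0 ≤ t → 0 ≤ lam t)
    (hint : ∀ t, 0 ≤ t → IntervalIntegrable lam volume 0 t)
    (hdiv : ∫⁻ t in Set.Ici (0:ℝ), ENNReal.ofReal (lam t) = ⊤) :
    Tendsto (fun t => ∫ s in (0:ℝ)..t, lam s) atTop atTop := by
  have hmono : MonotoneOn (fun t => ∫ s in (0:ℝ)..t, lam s) (Set.Ici 0) :=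
    fun a ha b hb hab => intervalIntegral.integral_mono_interval le_rfl ha hab
      ((ae_restrict_mem measurableSet_Ioc).mono fun s hs => hlam s hs.1.le) (hint b hb)
  refine tendsto_atTop_atTop.2 fun K => ?_
  by_contra! hK
  have hle : ∀ n : ℕ, ∫ s in (0:ℝ)..n, ‖lam s‖ ≤ K := fun n => by
    obtain ⟨a, hna, ha⟩ := hK n
    rw [intervalIntegral.integral_congr fun s hs => Real.norm_of_nonneg (hlam s ?_)]
    · exact (hmono (Set.mem_Ici.2 n.cast_nonneg) (Set.mem_Ici.2 (n.cast_nonneg.trans hna))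
        hna).trans ha.le
    · simpa using hs.1
  have hIoi : IntegrableOn lam (Set.Ioi 0) := integrableOn_Ioi_of_intervalIntegral_norm_bounded K 0
    (fun n : ℕ => (hint n n.cast_nonneg).1) tendsto_natCast_atTop_atTop (Eventually.of_forall hle)
  have hIci : IntegrableOn lam (Set.Ici 0) :=
    (integrableOn_Ici_iff_integrableOn_Ioi (by finiteness)).2 hIoi
  exact hIci.setLIntegral_lt_top.ne hdiv

section WeightedAverage

variable {E : Type*} [NormedAddCommGroup E] [NormedSpace ℝ E]

noncomputable def weightedAverage (lam : ℝ → ℝ) (f : ℝ → E) (t : ℝ) : E :=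
  (∫ s in (0:ℝ)..t, lam s)⁻¹ • ∫ s in (0:ℝ)..t, lam s • f s

theorem eventually_norm_weightedAverage_le {lam : ℝ → ℝ} {f : ℝ → E}
    (hlam : ∀ t, 0 ≤ t → 0 ≤ lam t)
    (hlamInt : ∀ t, 0 ≤ t → IntervalIntegrable lam volume 0 t)
    (hfInt : ∀ t, 0 ≤ t → IntervalIntegrable (fun s => lam s • f s) volume 0 t)
    (hΛ : Tendsto (fun t => ∫ s in (0:ℝ)..t, lam s) atTop atTop)
    {c c' : ℝ} (hc : c < c') (hf : ∀ᶠ s in atTop, ‖f s‖ ≤ c) :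
    ∀ᶠ t in atTop, ‖weightedAverage lam f t‖ ≤ c' := by
  obtain ⟨T, hT⟩ := (hf.and (eventually_ge_atTop 0)).exists_forall_of_atTop
  have hT0 : 0 ≤ T := (hT T le_rfl).2
  set A := ‖∫ s in (0:ℝ)..T, lam s • f s‖ - c * ∫ s in (0:ℝ)..T, lam s
  filter_upwards [eventually_ge_atTop T, hΛ.eventually_ge_atTop (A / (c' - c)),
    hΛ.eventually_gt_atTop 0] with t hTt hΛA hΛpos
  have ht0 : 0 ≤ t := hT0.trans hTt
  have hlamTt : IntervalIntegrable lam volume T t := (hlamInt T hT0).symm.trans (hlamInt t ht0)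
  have hfTt : IntervalIntegrable (fun s => lam s • f s) volume T t :=
    (hfInt T hT0).symm.trans (hfInt t ht0)
  have htail : ‖∫ s in T..t, lam s • f s‖ ≤ c * ∫ s in T..t, lam s := by
    rw [← intervalIntegral.integral_const_mul]
    refine intervalIntegral.norm_integral_le_of_norm_le hTt (ae_of_all _ fun s hs => ?_)
      (hlamTt.const_mul c)
    have hls : 0 ≤ lam s := hlam s (hT0.trans hs.1.le)
    rw [norm_smul, Real.norm_of_nonneg hls, mul_comm]
    exact mul_le_mul_of_nonneg_right (hT s hs.1.le).1 hls
  have hA : A ≤ (c' - c) * ∫ s in (0:ℝ)..t, lam s := (div_le_iff₀' (sub_pos.2 hc)).1 hΛA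
  have hnorm : ‖∫ s in (0:ℝ)..t, lam s • f s‖ ≤ c' * ∫ s in (0:ℝ)..t, lam s := by
    rw [← intervalIntegral.integral_add_adjacent_intervals (hfInt T hT0) hfTt]
    rw [← intervalIntegral.integral_add_adjacent_intervals (hlamInt T hT0) hlamTt] at hA ⊢
    linarith [norm_add_le (∫ s in (0:ℝ)..T, lam s • f s) (∫ s in T..t, lam s • f s)]
  rw [weightedAverage, norm_smul, Real.norm_of_nonneg (inv_nonneg.2 hΛpos.le),
    inv_mul_le_iff₀ hΛpos, mul_comm]
  exact hnorm

theorem isBoundedUnder_norm_weightedAverage {lam : ℝ → ℝ} {f : ℝ → E}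
    (hlam : ∀ t, 0 ≤ t → 0 ≤ lam t)
    (hlamInt : ∀ t, 0 ≤ t → IntervalIntegrable lam volume 0 t)
    (hfInt : ∀ t, 0 ≤ t → IntervalIntegrable (fun s => lam s • f s) volume 0 t)
    (hΛ : Tendsto (fun t => ∫ s in (0:ℝ)..t, lam s) atTop atTop)
    (hf : IsBoundedUnder (· ≤ ·) atTop fun t => ‖f t‖) :
    IsBoundedUnder (· ≤ ·) atTop fun t => ‖weightedAverage lam f t‖ :=
  let ⟨c, hc⟩ := hf
  ⟨c + 1, eventually_norm_weightedAverage_le hlam hlamInt hfInt hΛ (lt_add_one c) hc⟩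

theorem weightedAverage_eventuallyEq_zero {lam : ℝ → ℝ} {f : ℝ → E}
    (hfInt : ¬ ∀ t, 0 ≤ t → IntervalIntegrable (fun s => lam s • f s) volume 0 t) :
    weightedAverage lam f =ᶠ[atTop] 0 := by
  push Not at hfInt
  obtain ⟨t₀, ht₀, hnot⟩ := hfInt
  filter_upwards [eventually_ge_atTop t₀] with t ht
  rw [Pi.zero_apply, weightedAverage, intervalIntegral.integral_undef fun h =>
    hnot (h.mono_set (Set.uIcc_subset_uIcc_left (Set.mem_uIcc_of_le ht₀ ht))), smul_zero]

theorem weightedAverage_sub_const [CompleteSpace E] {lam : ℝ → ℝ} {f : ℝ → E} {t : ℝ}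
    (hlamInt : IntervalIntegrable lam volume 0 t)
    (hfInt : IntervalIntegrable (fun s => lam s • f s) volume 0 t)
    (hΛ : ∫ s in (0:ℝ)..t, lam s ≠ 0) (L : E) :
    weightedAverage lam (fun s => f s - L) t = weightedAverage lam f t - L := by
  simp only [weightedAverage, smul_sub]
  rw [intervalIntegral.integral_sub hfInt ⟨hlamInt.1.smul_const L, hlamInt.2.smul_const L⟩,
    intervalIntegral.integral_smul_const, smul_sub, smul_smul, inv_mul_cancel₀ hΛ, one_smul]

theorem tendsto_weightedAverage [CompleteSpace E] {lam : ℝ → ℝ} {f : ℝ → E}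
    (hlam : ∀ t, 0 ≤ t → 0 ≤ lam t)
    (hlamInt : ∀ t, 0 ≤ t → IntervalIntegrable lam volume 0 t)
    (hfInt : ∀ t, 0 ≤ t → IntervalIntegrable (fun s => lam s • f s) volume 0 t)
    (hΛ : Tendsto (fun t => ∫ s in (0:ℝ)..t, lam s) atTop atTop)
    {L : E} (hf : Tendsto f atTop (𝓝 L)) :
    Tendsto (weightedAverage lam f) atTop (𝓝 L) := by
  have hfLInt : ∀ t, 0 ≤ t → IntervalIntegrable (fun s => lam s • (f s - L)) volume 0 t :=
    fun t ht => by
      simpa only [smul_sub] using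
        (hfInt t ht).sub ⟨(hlamInt t ht).1.smul_const L, (hlamInt t ht).2.smul_const L⟩
  refine Metric.tendsto_nhds.2 fun ε hε => ?_
  have hfL : ∀ᶠ s in atTop, ‖f s - L‖ ≤ ε / 3 :=
    (Metric.tendsto_nhds.1 hf _ (by positivity)).mono fun s hs => (dist_eq_norm (f s) L ▸ hs).le
  filter_upwards [eventually_norm_weightedAverage_le hlam hlamInt hfLInt hΛ
    (by linarith : ε / 3 < ε / 2) hfL, eventually_ge_atTop 0, hΛ.eventually_gt_atTop 0]
    with t ht ht0 hΛpos
  rw [dist_eq_norm, ← weightedAverage_sub_const (hlamInt t ht0) (hfInt t ht0) hΛpos.ne' L]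
  linarith

end WeightedAverage

theorem intervalIntegral_inner [CompleteSpace H] {f : ℝ → H} {a b : ℝ} {μ : Measure ℝ}
    (hf : IntervalIntegrable f μ a b) (c : H) :
    ∫ s in a..b, ⟪f s, c⟫ ∂μ = ⟪∫ s in a..b, f s ∂μ, c⟫ := by
  simpa only [innerSL_apply_apply, real_inner_comm c] using
    (innerSL ℝ c).intervalIntegral_comp_comm hf

theorem IntervalIntegrable.smul_inner_const {lam : ℝ → ℝ} {f : ℝ → H} {a b : ℝ} {μ : Measure ℝ}
    (hf : IntervalIntegrable (fun s => lam s • f s) μ a b) (u : H) :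
    IntervalIntegrable (fun s => lam s • ⟪f s, u⟫) μ a b := by
  have h : IntervalIntegrable (fun s => ⟪lam s • f s, u⟫) μ a b :=
    ⟨hf.1.inner_const (𝕜 := ℝ) u, hf.2.inner_const (𝕜 := ℝ) u⟩
  simpa only [real_inner_smul_left, smul_eq_mul] using h

theorem inner_weightedAverage [CompleteSpace H] {lam : ℝ → ℝ} {f : ℝ → H} {t : ℝ}
    (hfInt : IntervalIntegrable (fun s => lam s • f s) volume 0 t) (u : H) :
    ⟪weightedAverage lam f t, u⟫ = weightedAverage lam (fun s => ⟪f s, u⟫) t := by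
  simp only [weightedAverage, real_inner_smul_left, ← intervalIntegral_inner hfInt, smul_eq_mul]

theorem tendsto_inner_sub_of_tendsto_norm_sub {ι : Type*} {l : Filter ι} {y : ι → H}
    {z₁ z₂ : H} {l₁ l₂ : ℝ} (h₁ : Tendsto (fun i => ‖y i - z₁‖) l (𝓝 l₁))
    (h₂ : Tendsto (fun i => ‖y i - z₂‖) l (𝓝 l₂)) :
    Tendsto (fun i => ⟪y i, z₁ - z₂⟫) l (𝓝 ((l₂ ^ 2 - l₁ ^ 2 + ‖z₁‖ ^ 2 - ‖z₂‖ ^ 2) / 2)) := by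
  have key : ∀ i, ⟪y i, z₁ - z₂⟫ = (‖y i - z₂‖ ^ 2 - ‖y i - z₁‖ ^ 2 + ‖z₁‖ ^ 2 - ‖z₂‖ ^ 2) / 2 :=
    fun i => by rw [norm_sub_sq_real, norm_sub_sq_real, inner_sub_right]; ring
  simp only [key]
  exact ((((h₂.pow 2).sub (h₁.pow 2)).add_const _).sub_const _).div_const 2

theorem tendsto_inner_weightedAverage_sub [CompleteSpace H] {lam : ℝ → ℝ} {x : ℝ → H}
    (hlam : ∀ t, 0 ≤ t → 0 ≤ lam t)
    (hlamInt : ∀ t, 0 ≤ t → IntervalIntegrable lam volume 0 t)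
    (hxInt : ∀ t, 0 ≤ t → IntervalIntegrable (fun s => lam s • x s) volume 0 t)
    (hΛ : Tendsto (fun t => ∫ s in (0:ℝ)..t, lam s) atTop atTop)
    {z₁ z₂ : H} {l₁ l₂ : ℝ} (h₁ : Tendsto (fun t => ‖x t - z₁‖) atTop (𝓝 l₁))
    (h₂ : Tendsto (fun t => ‖x t - z₂‖) atTop (𝓝 l₂)) :
    Tendsto (fun t => ⟪weightedAverage lam x t, z₁ - z₂⟫) atTop
      (𝓝 ((l₂ ^ 2 - l₁ ^ 2 + ‖z₁‖ ^ 2 - ‖z₂‖ ^ 2) / 2)) := by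
  refine (tendsto_weightedAverage hlam hlamInt (fun t ht => (hxInt t ht).smul_inner_const _) hΛ
    (tendsto_inner_sub_of_tendsto_norm_sub h₁ h₂)).congr' ?_
  filter_upwards [eventually_ge_atTop 0] with t ht
  exact (inner_weightedAverage (hxInt t ht) _).symm

def WeakTendsto {ι : Type*} (y : ι → H) (l : Filter ι) (q : H) : Prop :=
  ∀ u : H, Tendsto (fun i => ⟪y i, u⟫) l (𝓝 ⟪q, u⟫)

theorem exists_strictMono_weakTendsto_of_bounded [CompleteSpace H] {y : ℕ → H} {C : ℝ}
    (hC : ∀ n, ‖y n‖ ≤ C) : ∃ φ : ℕ → ℕ, StrictMono φ ∧ ∃ q, WeakTendsto (y ∘ φ) atTop q := by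
  -- sequential Banach–Alaoglu in the separable closed span `K` of the sequence; projecting onto
  -- `K` does not change the pairings with the `y n`
  set K : Submodule ℝ H := (Submodule.span ℝ (Set.range y)).topologicalClosure
  have hyK : ∀ n, y n ∈ K :=
    fun n => Submodule.le_topologicalClosure _ (Submodule.subset_span ⟨n, rfl⟩)
  have : TopologicalSpace.SeparableSpace K :=
    (Set.countable_range y).isSeparable.span.closure.separableSpace
  have hKclosed : IsClosed (K : Set H) := Submodule.isClosed_topologicalClosure _
  have : CompleteSpace K := hKclosed.completeSpace_coe
  let f : ℕ → WeakDual ℝ K := fun n => InnerProductSpace.toDual ℝ K ⟨y n, hyK n⟩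
  have hf : ∀ n, f n ∈ WeakDual.toStrongDual ⁻¹' Metric.closedBall 0 C := fun n =>
    (dist_zero_right _).trans_le (((InnerProductSpace.toDual ℝ K).norm_map _).trans_le (hC n))
  obtain ⟨g, -, φ, hφ, hlim⟩ := WeakDual.isSeqCompact_closedBall ℝ K 0 C hf
  refine ⟨φ, hφ, (InnerProductSpace.toDual ℝ K).symm g, fun u => ?_⟩
  have hpair := (tendsto_iff_forall_eval_tendsto_topDualPairing.1 hlim)
    (K.orthogonalProjectionOnto u)
  convert hpair using 2
  · exact (K.inner_orthogonalProjectionOnto_eq_of_mem_left ⟨y (φ _), hyK _⟩ u).symm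
  · exact (K.inner_orthogonalProjectionOnto_eq_of_mem_left _ u).symm.trans
      InnerProductSpace.toDual_symm_apply

theorem exists_strictMono_weakTendsto_comp_of_isBoundedUnder [CompleteSpace H] {y : ℝ → H}
    (hbdd : IsBoundedUnder (· ≤ ·) atTop fun t => ‖y t‖) {tn : ℕ → ℝ}
    (htn : Tendsto tn atTop atTop) :
    ∃ φ : ℕ → ℕ, StrictMono φ ∧ ∃ q, WeakTendsto (y ∘ tn ∘ φ) atTop q := by
  obtain ⟨C, hC⟩ := hbdd
  obtain ⟨N, hN⟩ := (htn.eventually hC).exists_forall_of_atTop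
  obtain ⟨φ, hφ, q, hq⟩ := exists_strictMono_weakTendsto_of_bounded (y := fun n => y (tn (n + N)))
    fun n => hN _ (Nat.le_add_left N n)
  exact ⟨fun n => φ n + N, fun a b hab => Nat.add_lt_add_right (hφ hab) N, q, hq⟩

theorem eq_of_weakTendsto_of_tendsto_inner_sub {ι : Type*} {l : Filter ι} {y : ι → H}
    {s₁ s₂ : ℕ → ι} {q₁ q₂ : H} (hs₁ : Tendsto s₁ atTop l) (hs₂ : Tendsto s₂ atTop l)
    (h₁ : WeakTendsto (y ∘ s₁) atTop q₁) (h₂ : WeakTendsto (y ∘ s₂) atTop q₂)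
    (hconv : ∃ L, Tendsto (fun i => ⟪y i, q₁ - q₂⟫) l (𝓝 L)) : q₁ = q₂ := by
  obtain ⟨L, hL⟩ := hconv
  have e₁ : ⟪q₁, q₁ - q₂⟫ = L := tendsto_nhds_unique (h₁ _) (hL.comp hs₁)
  have e₂ : ⟪q₂, q₁ - q₂⟫ = L := tendsto_nhds_unique (h₂ _) (hL.comp hs₂)
  rw [← sub_eq_zero, ← inner_self_eq_zero (𝕜 := ℝ), inner_sub_left, e₁, e₂, sub_self]

theorem exists_weakTendsto_of_isBoundedUnder_of_tendsto_inner_sub [CompleteSpace H] {S : Set H}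
    {y : ℝ → H}
    (hbdd : IsBoundedUnder (· ≤ ·) atTop fun t => ‖y t‖)
    (hconv : ∀ z₁ ∈ S, ∀ z₂ ∈ S, ∃ L, Tendsto (fun t => ⟪y t, z₁ - z₂⟫) atTop (𝓝 L))
    (hcluster : ∀ q, (∃ tn : ℕ → ℝ, Tendsto tn atTop atTop ∧ WeakTendsto (y ∘ tn) atTop q) →
      q ∈ S) :
    ∃ q ∈ S, WeakTendsto y atTop q := by
  have hsubseq : ∀ tn : ℕ → ℝ, Tendsto tn atTop atTop →
      ∃ φ : ℕ → ℕ, StrictMono φ ∧ ∃ q ∈ S, WeakTendsto (y ∘ tn ∘ φ) atTop q := by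
    intro tn htn
    obtain ⟨φ, hφ, q, hq⟩ := exists_strictMono_weakTendsto_comp_of_isBoundedUnder hbdd htn
    exact ⟨φ, hφ, q, hcluster q ⟨tn ∘ φ, htn.comp hφ.tendsto_atTop, hq⟩, hq⟩
  obtain ⟨φ₀, hφ₀, q, hqS, hq⟩ := hsubseq _ tendsto_natCast_atTop_atTop
  refine ⟨q, hqS, fun u => tendsto_of_subseq_tendsto fun tn htn => ?_⟩
  obtain ⟨φ, hφ, q', hq'S, hq'⟩ := hsubseq tn htn
  obtain rfl : q' = q := eq_of_weakTendsto_of_tendsto_inner_sub (htn.comp hφ.tendsto_atTop)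
    (tendsto_natCast_atTop_atTop.comp hφ₀.tendsto_atTop) hq' hq (hconv q' hq'S q hqS)
  exact ⟨φ, hq' u⟩

theorem ergodic_continuous_opial_general [CompleteSpace H]
    (S : Set H) (hS : S.Nonempty)
    (x : ℝ → H)
    (lam : ℝ → ℝ)
    (hpos : ∀ t : ℝ, 0 ≤ t → 0 < lam t)
    (hloc : ∀ b > (0:ℝ), IntegrableOn lam (Set.Icc 0 b) volume)
    (hdiv : ∫⁻ t in Set.Ici (0:ℝ), ENNReal.ofReal (lam t) = ⊤)
    (xt : ℝ → H)
    (hxt : ∀ t : ℝ, xt t = (∫ s in (0:ℝ)..t, lam s)⁻¹ • ∫ s in (0:ℝ)..t, lam s • x s)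
    (hlim : ∀ z ∈ S, ∃ l : ℝ, Tendsto (fun t => ‖x t - z‖) atTop (nhds l))
    (hcluster : ∀ q : H, (∃ tn : ℕ → ℝ, Tendsto tn atTop atTop ∧
        ∀ u : H, Tendsto (fun n => (⟪xt (tn n), u⟫ : ℝ)) atTop (nhds ⟪q, u⟫)) → q ∈ S) :
    ∃ xinf ∈ S, ∀ u : H, Tendsto (fun t => (⟪xt t, u⟫ : ℝ)) atTop (nhds ⟪xinf, u⟫) := by
  obtain rfl : xt = weightedAverage lam x := funext hxt
  have hlam : ∀ t, 0 ≤ t → 0 ≤ lam t := fun t ht => (hpos t ht).le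
  have hlamInt : ∀ t, 0 ≤ t → IntervalIntegrable lam volume 0 t := fun t ht => by
    rcases ht.eq_or_lt with rfl | ht
    · exact IntervalIntegrable.refl
    · exact (intervalIntegrable_iff_integrableOn_Icc_of_le ht.le).2 (hloc t ht)
  have hΛ := tendsto_intervalIntegral_atTop_of_lintegral_eq_top hlam hlamInt hdiv
  obtain ⟨hbdd, hconv⟩ : (IsBoundedUnder (· ≤ ·) atTop fun t => ‖weightedAverage lam x t‖) ∧
      ∀ z₁ ∈ S, ∀ z₂ ∈ S, ∃ L,
        Tendsto (fun t => ⟪weightedAverage lam x t, z₁ - z₂⟫) atTop (𝓝 L) := by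
    by_cases hxInt : ∀ t, 0 ≤ t → IntervalIntegrable (fun s => lam s • x s) volume 0 t
    · obtain ⟨z₀, hz₀⟩ := hS
      obtain ⟨l₀, hl₀⟩ := hlim z₀ hz₀
      have hx : IsBoundedUnder (· ≤ ·) atTop fun t => ‖x t‖ :=
        (hl₀.add_const ‖z₀‖).isBoundedUnder_le.mono_le (Eventually.of_forall fun t => by
          linarith [norm_le_norm_add_norm_sub' (x t) z₀])
      refine ⟨isBoundedUnder_norm_weightedAverage hlam hlamInt hxInt hΛ hx,
        fun z₁ h₁ z₂ h₂ => ?_⟩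
      obtain ⟨l₁, hl₁⟩ := hlim z₁ h₁
      obtain ⟨l₂, hl₂⟩ := hlim z₂ h₂
      exact ⟨_, tendsto_inner_weightedAverage_sub hlam hlamInt hxInt hΛ hl₁ hl₂⟩
    · -- the averages are junk values: `lam • x` is not integrable on `[0, t]` for large `t`
      have hzero : Tendsto (weightedAverage lam x) atTop (𝓝 0) :=
        tendsto_const_nhds.congr' (weightedAverage_eventuallyEq_zero hxInt).symm
      exact ⟨hzero.norm.isBoundedUnder_le, fun z₁ _ z₂ _ => ⟨_, hzero.inner tendsto_const_nhds⟩⟩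
  exact exists_weakTendsto_of_isBoundedUnder_of_tendsto_inner_sub hbdd hconv hcluster

/-- the ergodic continuous Opial lemma. Weak convergence is expressed via
inner products against arbitrary vectors. -/
theorem ergodic_continuous_opial [CompleteSpace H]
    (S : Set H) (hS : S.Nonempty)
    (x : ℝ → H) (hx : StronglyMeasurable x)
    (lam : ℝ → ℝ) (hmeas : Measurable lam)
    (hpos : ∀ t : ℝ, 0 ≤ t → 0 < lam t)
    (hloc : ∀ b > (0:ℝ), IntegrableOn lam (Set.Icc 0 b) volume)
    (hdiv : ∫⁻ t in Set.Ici (0:ℝ), ENNReal.ofReal (lam t) = ⊤)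
    (xt : ℝ → H)
    (hxt : ∀ t : ℝ, xt t = (∫ s in (0:ℝ)..t, lam s)⁻¹ • ∫ s in (0:ℝ)..t, lam s • x s)
    (hlim : ∀ z ∈ S, ∃ l : ℝ, Tendsto (fun t => ‖x t - z‖) atTop (nhds l))
    (hcluster : ∀ q : H, (∃ tn : ℕ → ℝ, Tendsto tn atTop atTop ∧
        ∀ u : H, Tendsto (fun n => (⟪xt (tn n), u⟫ : ℝ)) atTop (nhds ⟪q, u⟫)) → q ∈ S) :
    ∃ xinf ∈ S, ∀ u : H, Tendsto (fun t => (⟪xt t, u⟫ : ℝ)) atTop (nhds ⟪xinf, u⟫) :=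
  ergodic_continuous_opial_general S hS x lam hpos hloc hdiv xt hxt hlim hcluster
end
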